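/- arXiv:1201.6682 — 3 statements merged into one kernel-verified Lean document; each statement's English description precedes it below -/
import Mathlib

section
/- The arc length of the quarter ellipse with semiaxes a > 0 and b > 0 equals (1/(2√2)) · ∫_{-1}^{1} √((a² + b² - (a² - b²)z)/(1 - z²)) dz. -/
/-! The substitution `z = cos t` turns `dz / √(1 - z²)` into `dt` on `(0, π)`, so the right-hand
side is `∫₀^π √(a² + b² - (a² - b²) cos t) dt`; with `t = 2θ` the radicand becomes
`2 (a² sin² θ + b² cos² θ)`, the squared speed of `θ ↦ (a cos θ, b sin θ)` times two. -/

/-- The arc length of the quarter ellipse `{(x,y) : x²/a² + y²/b² = 1, x ≥ 0, y ≥ 0}`,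
computed via the standard parametrization `θ ↦ (a cos θ, b sin θ)`, `θ ∈ [0, π/2]`. -/
noncomputable def quarterEllipsePerimeter (a b : ℝ) : ℝ :=
  ∫ θ in (0:ℝ)..(Real.pi / 2),
    Real.sqrt ((a * Real.sin θ) ^ 2 + (b * Real.cos θ) ^ 2)

open Real Set MeasureTheory intervalIntegral

theorem Real.cos_image_Ioo_zero_pi : cos '' Ioo 0 π = Ioo (-1) 1 :=
  cosPartialHomeomorph.image_source_eq_target

theorem integral_neg_one_one_eq_integral_sin_smul_comp_cos {E : Type*} [NormedAddCommGroup E]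
    [NormedSpace ℝ E] (g : ℝ → E) :
    ∫ z in (-1)..1, g z = ∫ t in 0..π, sin t • g (cos t) := by
  rw [integral_of_le (by norm_num), integral_of_le pi_pos.le, integral_Ioc_eq_integral_Ioo,
    integral_Ioc_eq_integral_Ioo, ← cos_image_Ioo_zero_pi,
    integral_image_eq_integral_abs_deriv_smul measurableSet_Ioo
      (fun t _ => (hasDerivAt_cos t).hasDerivWithinAt) (injOn_cos.mono Ioo_subset_Icc_self)]
  refine setIntegral_congr_fun measurableSet_Ioo fun t ht => ?_
  rw [abs_neg, abs_of_pos (sin_pos_of_pos_of_lt_pi ht.1 ht.2)]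

theorem integral_sqrt_div_one_sub_sq_eq_integral_sqrt_comp_cos (N : ℝ → ℝ) :
    ∫ z in (-1)..1, √(N z / (1 - z ^ 2)) = ∫ t in 0..π, √(N (cos t)) := by
  rw [integral_neg_one_one_eq_integral_sin_smul_comp_cos, integral_of_le pi_pos.le,
    integral_of_le pi_pos.le, integral_Ioc_eq_integral_Ioo, integral_Ioc_eq_integral_Ioo]
  refine setIntegral_congr_fun measurableSet_Ioo fun t ht => ?_
  have hsin : 0 < sin t := sin_pos_of_pos_of_lt_pi ht.1 ht.2
  rw [smul_eq_mul, ← sin_sq, sqrt_div' _ (sq_nonneg _), sqrt_sq hsin.le,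
    mul_div_cancel₀ _ hsin.ne']

theorem sq_add_sq_sub_mul_cos_two_mul (a b θ : ℝ) :
    a ^ 2 + b ^ 2 - (a ^ 2 - b ^ 2) * cos (2 * θ) = 2 * ((a * sin θ) ^ 2 + (b * cos θ) ^ 2) := by
  rw [cos_two_mul]
  linear_combination (-2 * a ^ 2) * sin_sq_add_cos_sq θ

theorem euler_quarter_ellipse_integral_general (a b : ℝ) :
    quarterEllipsePerimeter a b =
      (1 / (2 * Real.sqrt 2)) *
        ∫ z in (-1:ℝ)..1,
          Real.sqrt ((a ^ 2 + b ^ 2 - (a ^ 2 - b ^ 2) * z) / (1 - z ^ 2)) := by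
  have half_angle : ∫ t in 0..π, √(a ^ 2 + b ^ 2 - (a ^ 2 - b ^ 2) * cos t)
      = 2 * √2 * quarterEllipsePerimeter a b := by
    have h := smul_integral_comp_mul_left (fun t => √(a ^ 2 + b ^ 2 - (a ^ 2 - b ^ 2) * cos t))
      (a := 0) (b := π / 2) 2
    simp only [sq_add_sq_sub_mul_cos_two_mul, sqrt_mul zero_le_two,
      intervalIntegral.integral_const_mul, mul_zero, mul_div_cancel₀ π two_ne_zero,
      smul_eq_mul] at h
    rw [← h, quarterEllipsePerimeter]; ring
  rw [integral_sqrt_div_one_sub_sq_eq_integral_sqrt_comp_cos, half_angle]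
  field_simp

theorem euler_quarter_ellipse_integral (a b : ℝ) (ha : 0 < a) (hb : 0 < b) :
    quarterEllipsePerimeter a b =
      (1 / (2 * Real.sqrt 2)) *
        ∫ z in (-1:ℝ)..1,
          Real.sqrt ((a ^ 2 + b ^ 2 - (a ^ 2 - b ^ 2) * z) / (1 - z ^ 2)) :=
  euler_quarter_ellipse_integral_general a b
end

section
/- For |n| < 1, the quarter perimeter of the ellipse with semiaxes a = c√((1+n)/2) and b = c√((1-n)/2), where c > 0 and c² = a² + b², equals (cπ/(2√2)) · (1 - ∑_{k=1}^{∞} α_k n^{2k}), where α_1 = 1/16 and α_{k+1}/α_k = ((4k-1)(4k+1))/((4k+4)²) for k ≥ 1. -/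
/-- Euler's coefficients: `α 1 = 1/16`, `α (k+1) = α k · ((4k-1)(4k+1))/((4k+4)²)`. -/
noncomputable def eulerAlpha : ℕ → ℝ
  | 0 => 0
  | 1 => 1 / 16
  | (k + 2) =>
      eulerAlpha (k + 1) *
        ((4 * (k + 1 : ℝ) - 1) * (4 * (k + 1 : ℝ) + 1)) / ((4 * (k + 1 : ℝ) + 4) ^ 2)

/-!
With `a² = c²(1+n)/2` and `b² = c²(1-n)/2`, the integrand `√(a² sin² θ + b² cos² θ)` equals
`(c/√2) √(1 - n cos 2θ)`, so the quarter perimeter is `c/(2√2) ∫₀^π √(1 - n cos φ) dφ`.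
Expanding the square root by the binomial series and integrating term by term (the series is
dominated by `∑ |(1/2 choose k)| |n|ᵏ`) leaves the Wallis integrals `∫₀^π cosᵏ`. The odd ones
vanish; for the even ones, the recursions `(1/2 choose k+1) = (1/2 choose k) (1/2 - k)/(k+1)` and
`∫₀^π cosᵏ⁺² = (k+1)/(k+2) ∫₀^π cosᵏ` combine into exactly the recursion defining `eulerAlpha`.
-/

open Real

theorem Ring.choose_succ_right_eq {𝕜 : Type*} [Field 𝕜] [CharZero 𝕜] (a : 𝕜) (k : ℕ) :
    Ring.choose a (k + 1) = Ring.choose a k * (a - k) / (k + 1) := by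
  rw [Ring.choose_eq_smul, Ring.choose_eq_smul, ← Polynomial.aeval_eq_smeval,
    ← Polynomial.aeval_eq_smeval, descPochhammer_succ_right, Nat.factorial_succ]
  simp only [map_mul, map_sub, Polynomial.aeval_X, map_natCast, smul_eq_mul]
  push_cast
  field_simp

theorem hasSum_choose_mul_pow (a : ℝ) {x : ℝ} (hx : |x| < 1) :
    HasSum (fun k => Ring.choose a k * x ^ k) ((1 + x) ^ a) := by
  have h := (one_add_rpow_hasFPowerSeriesOnBall_zero (a := a)).hasSum (y := x)
    (by simpa [Metric.mem_eball, edist_dist] using hx)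
  simpa [binomialSeries, FormalMultilinearSeries.ofScalars_apply_eq, mul_comm] using h

theorem summable_abs_choose_mul_pow (a : ℝ) {x : ℝ} (hx : |x| < 1) :
    Summable fun k => |Ring.choose a k| * |x| ^ k := by
  have h := (binomialSeries ℝ a).summable_norm_mul_pow (r := ‖x‖₊)
    (lt_of_lt_of_le (by simpa [← ENNReal.coe_one, ENNReal.coe_lt_coe, ← NNReal.coe_lt_coe] using hx)
      binomialSeries_radius_ge_one)
  simpa [binomialSeries, FormalMultilinearSeries.ofScalars_norm] using h

open MeasureTheory in
theorem hasSum_integral_one_add_mul_rpow (a : ℝ) {x : ℝ} (hx : |x| < 1) {g : ℝ → ℝ}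
    (hg : Continuous g) (hg_le : ∀ t, |g t| ≤ 1) (u v : ℝ) :
    HasSum (fun k => Ring.choose a k * x ^ k * ∫ t in u..v, g t ^ k)
      (∫ t in u..v, (1 + x * g t) ^ a) := by
  have hxg (t : ℝ) : |x * g t| ≤ |x| := by
    rw [abs_mul]; exact mul_le_of_le_one_right (abs_nonneg x) (hg_le t)
  have key := intervalIntegral.hasSum_integral_of_dominated_convergence
    (F := fun k t => Ring.choose a k * (x * g t) ^ k) (μ := volume) (a := u) (b := v)
    (fun k _ => |Ring.choose a k| * |x| ^ k)
    (fun k => (by fun_prop : Continuous _).aestronglyMeasurable)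
    (fun k => ae_of_all _ fun t _ => by
      rw [norm_mul, norm_pow, Real.norm_eq_abs, Real.norm_eq_abs]
      exact mul_le_mul_of_nonneg_left (pow_le_pow_left₀ (abs_nonneg _) (hxg t) k) (abs_nonneg _))
    (ae_of_all _ fun _ _ => summable_abs_choose_mul_pow a hx) intervalIntegrable_const
    (ae_of_all _ fun t _ => hasSum_choose_mul_pow a ((hxg t).trans_lt hx))
  simpa only [mul_pow, ← mul_assoc, intervalIntegral.integral_const_mul] using key

theorem integral_cos_pow_add_two_zero_pi (k : ℕ) :
    ∫ x in (0:ℝ)..π, cos x ^ (k + 2) = (k + 1) / (k + 2) * ∫ x in (0:ℝ)..π, cos x ^ k := by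
  simp [integral_cos_pow]

theorem integral_cos_pow_odd_zero_pi (m : ℕ) : ∫ x in (0:ℝ)..π, cos x ^ (2 * m + 1) = 0 := by
  induction m with
  | zero => simp
  | succ m ih => rw [show 2 * (m + 1) + 1 = 2 * m + 1 + 2 by ring,
      integral_cos_pow_add_two_zero_pi, ih, mul_zero]

theorem pi_mul_eulerAlpha_succ (m : ℕ) :
    π * eulerAlpha (m + 1) =
      -(Ring.choose (1 / 2 : ℝ) (2 * m + 2) * ∫ x in (0:ℝ)..π, cos x ^ (2 * m + 2)) := by
  induction m with
  | zero =>
    norm_num [eulerAlpha, Ring.choose_succ_right_eq]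
    ring
  | succ m ih =>
    rw [show 2 * (m + 1) + 2 = 2 * m + 2 + 1 + 1 by ring, Ring.choose_succ_right_eq,
      Ring.choose_succ_right_eq, integral_cos_pow_add_two_zero_pi, eulerAlpha.eq_3]
    linear_combination (norm := skip)
      ((4 * (m + 1 : ℝ) - 1) * (4 * (m + 1 : ℝ) + 1)) / ((4 * (m + 1 : ℝ) + 4) ^ 2) * ih
    push_cast
    field_simp
    ring

theorem quarterEllipsePerimeter_eq_integral_sqrt {c n : ℝ} (hc : 0 ≤ c) (hn : |n| ≤ 1) :
    quarterEllipsePerimeter (c * √((1 + n) / 2)) (c * √((1 - n) / 2)) =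
      c / (2 * √2) * ∫ φ in (0:ℝ)..π, √(1 - n * cos φ) := by
  obtain ⟨hn₁, hn₂⟩ := abs_le.mp hn
  have hsq (θ : ℝ) : (c * √((1 + n) / 2) * sin θ) ^ 2 + (c * √((1 - n) / 2) * cos θ) ^ 2 =
      (c / √2) ^ 2 * (1 - n * cos (2 * θ)) := by
    simp only [mul_pow, div_pow]
    rw [sq_sqrt (by linarith), sq_sqrt (by linarith), sq_sqrt zero_le_two, cos_two_mul, sin_sq]
    ring
  simp only [quarterEllipsePerimeter, hsq, sqrt_mul (sq_nonneg _),
    sqrt_sq (by positivity : 0 ≤ c / √2), intervalIntegral.integral_const_mul]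
  rw [intervalIntegral.integral_comp_mul_left (fun φ => √(1 - n * cos φ)) two_ne_zero]
  simp only [mul_zero, smul_eq_mul, show 2 * (π / 2) = π by ring]
  ring

theorem integral_sqrt_one_sub_mul_cos {n : ℝ} (hn : |n| < 1) :
    ∫ φ in (0:ℝ)..π, √(1 - n * cos φ) =
      π * (1 - ∑' k : ℕ, eulerAlpha (k + 1) * n ^ (2 * (k + 1))) := by
  set f : ℕ → ℝ := fun k => Ring.choose (1 / 2 : ℝ) k * (-n) ^ k * ∫ x in (0:ℝ)..π, cos x ^ k
  have hf : HasSum f (∫ φ in (0:ℝ)..π, √(1 - n * cos φ)) := by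
    simpa [f, sqrt_eq_rpow, ← sub_eq_add_neg] using
      hasSum_integral_one_add_mul_rpow (1 / 2) (x := -n) (by rwa [abs_neg]) continuous_cos
        abs_cos_le_one 0 π
  have hodd : ∀ k ∉ Set.range (2 * ·), f k = 0 := by
    intro k hk
    obtain ⟨m, rfl⟩ : Odd k :=
      Nat.not_even_iff_odd.mp fun ⟨m, hm⟩ => hk ⟨m, show 2 * m = _ by omega⟩
    simp [f, integral_cos_pow_odd_zero_pi]
  have htail := (hasSum_nat_add_iff' 1).mpr
    (((mul_right_injective₀ two_ne_zero).hasSum_iff hodd).mpr hf)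
  have hterm (m : ℕ) : f (2 * (m + 1)) = -π * (eulerAlpha (m + 1) * n ^ (2 * (m + 1))) := by
    simp only [f]
    rw [Even.neg_pow (even_two_mul _), show 2 * (m + 1) = 2 * m + 2 by ring]
    linear_combination n ^ (2 * m + 2) * pi_mul_eulerAlpha_succ m
  have hf₀ : f 0 = π := by simp [f]
  simp only [Function.comp_def, hterm, Finset.sum_range_one, mul_zero, hf₀] at htail
  have hsum := htail.div_const (-π)
  simp only [mul_div_cancel_left₀ _ (neg_ne_zero.mpr pi_ne_zero)] at hsum
  rw [hsum.tsum_eq]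
  field_simp
  ring

theorem euler_series_perimeter (n c : ℝ) (hn : |n| < 1) (hc : 0 < c) :
    quarterEllipsePerimeter (c * Real.sqrt ((1 + n) / 2)) (c * Real.sqrt ((1 - n) / 2)) =
      (c * Real.pi / (2 * Real.sqrt 2)) *
        (1 - ∑' k : ℕ, eulerAlpha (k + 1) * n ^ (2 * (k + 1))) := by
  rw [quarterEllipsePerimeter_eq_integral_sqrt hc.le hn.le, integral_sqrt_one_sub_mul_cos hn]
  ring
end

section
/- The series 1 - ∑_{k=1}^{∞} α_k, where α_1 = 1/16 and α_{k+1} = α_k · ((4k-1)(4k+1))/((4k+4)²), converges and its sum equals 2√2/π. -/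
open Filter Topology Finset Real

noncomputable def sinPartialProd (x : ℝ) (n : ℕ) : ℝ :=
  ∏ j ∈ range n, (1 - x ^ 2 / ((j : ℝ) + 1) ^ 2)

lemma sinPartialProd_sub_succ (x : ℝ) (n : ℕ) :
    sinPartialProd x n - sinPartialProd x (n + 1) =
      x ^ 2 / ((n : ℝ) + 1) ^ 2 * sinPartialProd x n := by
  rw [sinPartialProd, sinPartialProd, prod_range_succ]
  ring

lemma tendsto_sinPartialProd {x : ℝ} (hx : x ≠ 0) :
    Tendsto (sinPartialProd x) atTop (𝓝 (sin (π * x) / (π * x))) := by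
  have hπx : π * x ≠ 0 := mul_ne_zero pi_ne_zero hx
  refine ((tendsto_euler_sin_prod x).div_const (π * x)).congr fun n => ?_
  rw [sinPartialProd, mul_div_cancel_left₀ _ hπx]

lemma summable_sq_div_sq_mul_sinPartialProd (x : ℝ) :
    Summable fun k : ℕ => x ^ 2 / ((k : ℝ) + 1) ^ 2 * sinPartialProd x k := by
  rcases eq_or_ne x 0 with rfl | hx
  · simp
  obtain ⟨C, hC⟩ := (tendsto_sinPartialProd hx).norm.bddAbove_range
  refine Summable.of_norm_bounded ((summable_pow_div_add (x ^ 2) 2 1 one_lt_two).mul_right C)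
    fun k => ?_
  rw [norm_mul]
  push_cast
  exact mul_le_mul_of_nonneg_left (hC ⟨k, rfl⟩) (norm_nonneg _)

lemma hasSum_sq_div_sq_mul_sinPartialProd {x : ℝ} (hx : x ≠ 0) :
    HasSum (fun k : ℕ => x ^ 2 / ((k : ℝ) + 1) ^ 2 * sinPartialProd x k)
      (1 - sin (π * x) / (π * x)) := by
  rw [(summable_sq_div_sq_mul_sinPartialProd x).hasSum_iff_tendsto_nat]
  have hpartial (n : ℕ) : ∑ k ∈ range n, x ^ 2 / ((k : ℝ) + 1) ^ 2 * sinPartialProd x k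
      = 1 - sinPartialProd x n := by
    simp_rw [← sinPartialProd_sub_succ, sum_range_sub', sinPartialProd, range_zero, prod_empty]
  simp_rw [hpartial]
  exact tendsto_const_nhds.sub (tendsto_sinPartialProd hx)

lemma eulerAlpha_succ_eq (k : ℕ) :
    eulerAlpha (k + 1) = (1 / 4) ^ 2 / ((k : ℝ) + 1) ^ 2 * sinPartialProd (1 / 4) k := by
  induction k with
  | zero => norm_num [eulerAlpha, sinPartialProd]
  | succ k ih =>
    rw [eulerAlpha, ih, sinPartialProd, sinPartialProd, prod_range_succ]
    push_cast
    field_simp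
    ring

theorem euler_degenerate_sum :
    HasSum (fun k : ℕ => eulerAlpha (k + 1)) (1 - 2 * Real.sqrt 2 / Real.pi) := by
  have hsinc : sin (π * (1 / 4)) / (π * (1 / 4)) = 2 * √2 / π := by
    rw [mul_one_div, sin_pi_div_four]
    field_simp
    ring
  simpa only [eulerAlpha_succ_eq, hsinc] using
    hasSum_sq_div_sq_mul_sinPartialProd (x := 1 / 4) (by norm_num)
end
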